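/- Let T₁, T₂, T₃ ⊂ ℂ[x₁,...,xₙ] satisfy the EK-quadratics condition and let {i, j, k} = {1, 2, 3}. Let C ∈ T_k and let A = a² ∈ T_i be the square of a linear form a. Then at least one of the following holds: (1) there exist T ∈ T_j, α ∈ ℂ and a linear form b with T = α·C + a·b; (2) a ∈ MS(C); (3) C = b² for some linear form b and there exists T ∈ T_j with T ∈ ⟨a, b⟩. -/

import Mathlib

/-!
Since `a ≠ 0` is a linear form, a linear substitution `ψ` kills `a` with `f ≡ ψ f (mod a)`,
so `⟨a, D⟩ = ψ⁻¹⟨ψ D⟩` is prime whenever `ψ D` is irreducible; the EK condition for `a²` and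
`C` then puts some `T' ∈ T_j` into `⟨a, D⟩`. For `C` irreducible and `ψ C` irreducible take
`D = C` and compare degree-two parts to get `T' = αC + ab`; if `ψ C = uv` is reducible, then
`C = uv + ae` is a minimal (rank-two) representation of `C` containing `a`. For `C = b²`, either
`ψ b = 0`, so `b` is a multiple of `a` and `a ∈ MS(b²)`, or `ψ b` is a nonzero linear form,
hence irreducible, and `D = b` works.
-/

open MvPolynomial

noncomputable section

/-- A linear form: a homogeneous polynomial of degree 1. -/
def IsLinearForm {n : ℕ} (l : MvPolynomial (Fin n) ℂ) : Prop :=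
  l.IsHomogeneous 1

/-- A representation of `Q` as a sum of `r` products of pairs of linear forms. -/
def IsRep {n : ℕ} (Q : MvPolynomial (Fin n) ℂ) (r : ℕ)
    (a : ℕ → MvPolynomial (Fin n) ℂ) : Prop :=
  (∀ i < 2 * r, IsLinearForm (a i)) ∧
    Q = ∑ k ∈ Finset.range r, a (2 * k) * a (2 * k + 1)

/-- `rankS Q` is the minimal `r` such that `Q` is a sum of `r` products of linear forms. -/
noncomputable def rankS {n : ℕ} (Q : MvPolynomial (Fin n) ℂ) : ℕ :=
  sInf {r | ∃ a, IsRep Q r a}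

/-- The minimal space of a quadratic: the span of the linear forms in a minimal
representation (independent of the chosen minimal representation). -/
noncomputable def MS {n : ℕ} (Q : MvPolynomial (Fin n) ℂ) :
    Submodule ℂ (MvPolynomial (Fin n) ℂ) :=
  ⨆ (a : ℕ → MvPolynomial (Fin n) ℂ) (_ : IsRep Q (rankS Q) a),
    Submodule.span ℂ (a '' Set.Iio (2 * rankS Q))

/-- A linear space whose elements are all linear forms. -/
def IsLinFormSpace {n : ℕ} (V : Submodule ℂ (MvPolynomial (Fin n) ℂ)) : Prop :=
  ∀ v ∈ V, MvPolynomial.IsHomogeneous v 1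

/-- `ℂ[V]₂`: homogeneous quadratic polynomials depending only on the linear forms in `V`. -/
noncomputable def CV2 {n : ℕ} (V : Submodule ℂ (MvPolynomial (Fin n) ℂ)) :
    Submodule ℂ (MvPolynomial (Fin n) ℂ) :=
  Subalgebra.toSubmodule (Algebra.adjoin ℂ (V : Set (MvPolynomial (Fin n) ℂ))) ⊓
    MvPolynomial.homogeneousSubmodule (Fin n) ℂ 2

/-- The EK-quadratics condition for a triple of finite sets of polynomials. -/
def EKQuadCond {n : ℕ} (T : Fin 3 → Finset (MvPolynomial (Fin n) ℂ)) : Prop :=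
  (∀ i, ∀ P ∈ T i, ∀ j, ∀ Q ∈ T j, P ≠ Q → ∀ c : ℂ, Q ≠ c • P) ∧
  (∀ i, ∀ P ∈ T i,
      (Irreducible P ∧ P.IsHomogeneous 2) ∨ ∃ l, IsLinearForm l ∧ P = l * l) ∧
  (∀ i j k : Fin 3, i ≠ j → j ≠ k → i ≠ k →
      ∀ Q₁ ∈ T i, ∀ Q₂ ∈ T j,
        (∏ Q ∈ T k, Q) ∈ (Ideal.span {Q₁, Q₂}).radical)

namespace Ideal

variable {R : Type*} [CommRing R]

theorem span_pair_le_span_pair {a b c d : R} (hca : c ∣ a) (hdb : d ∣ b) :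
    span {a, b} ≤ span {c, d} := by
  rw [span_le, Set.insert_subset_iff, Set.singleton_subset_iff]
  exact ⟨span_mono (by simp) (mem_span_singleton.2 hca),
    span_mono (by simp) (mem_span_singleton.2 hdb)⟩

theorem exists_mem_of_prod_mem_radical {I P : Ideal R} [hP : P.IsPrime] (hIP : I ≤ P)
    {s : Finset R} (h : ∏ x ∈ s, x ∈ I.radical) : ∃ x ∈ s, x ∈ P :=
  IsPrime.prod_mem_iff.1 ((hP.radical_le_iff).2 hIP h)

variable {F : Type*} [FunLike F R R] [RingHomClass F R R] {ψ : F} {a : R}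

theorem span_pair_eq_comap_span_singleton (hψ : ∀ f, f - ψ f ∈ span {a}) (hψa : ψ a = 0)
    (D : R) : span {a, D} = (span {ψ D}).comap ψ := by
  have ha_le : span {a} ≤ span {a, D} := span_mono (by simp)
  refine le_antisymm ?_ fun f hf ↦ ?_
  · rw [span_le, Set.insert_subset_iff, Set.singleton_subset_iff]
    exact ⟨by simp [hψa], mem_span_singleton_self _⟩
  · obtain ⟨w, hw⟩ := mem_span_singleton'.1 (mem_comap.1 hf)
    have hD : D ∈ span {a, D} := subset_span (by simp)
    have key : f = (f - ψ f) - w * (D - ψ D) + w * D := by rw [← hw]; ring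
    rw [key]
    exact add_mem (sub_mem (ha_le (hψ f)) (mul_mem_left _ _ (ha_le (hψ D))))
      (mul_mem_left _ _ hD)

theorem isPrime_span_pair_of_prime (hψ : ∀ f, f - ψ f ∈ span {a}) (hψa : ψ a = 0) {D : R}
    (hD : Prime (ψ D)) : (span {a, D}).IsPrime := by
  rw [span_pair_eq_comap_span_singleton hψ hψa D]
  have := (span_singleton_prime hD.ne_zero).2 hD
  exact IsPrime.comap ψ

end Ideal

namespace MvPolynomial

section Homogeneous

variable {σ R : Type*} [CommRing R]

attribute [local instance] MvPolynomial.gradedAlgebra in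
theorem homogeneousComponent_mul_of_isHomogeneous_right {p q : MvPolynomial σ R} {m : ℕ}
    (hq : q.IsHomogeneous m) (k : ℕ) :
    homogeneousComponent (k + m) (p * q) = homogeneousComponent k p * q := by
  rw [← decomposition.decompose'_apply, ← decomposition.decompose'_apply]
  have key := DirectSum.coe_decompose_mul_of_right_mem_of_le (𝒜 := homogeneousSubmodule σ R)
    (a := p) hq (Nat.le_add_left m k)
  rwa [Nat.add_sub_cancel] at key

theorem IsHomogeneous.exists_eq_mul_of_mem_span_singleton {f a : MvPolynomial σ R} {k : ℕ}
    (hf : f.IsHomogeneous (k + 1)) (ha : a.IsHomogeneous 1) (h : f ∈ Ideal.span {a}) :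
    ∃ e : MvPolynomial σ R, e.IsHomogeneous k ∧ f = a * e := by
  obtain ⟨w, rfl⟩ := Ideal.mem_span_singleton'.1 h
  refine ⟨homogeneousComponent k w, homogeneousComponent_isHomogeneous k w, ?_⟩
  rw [← homogeneousComponent_eq_self hf, homogeneousComponent_mul_of_isHomogeneous_right ha,
    mul_comm]

theorem IsHomogeneous.exists_eq_smul_add_mul_of_mem_span_pair {T a C : MvPolynomial σ R}
    (hT : T.IsHomogeneous 2) (ha : a.IsHomogeneous 1) (hC : C.IsHomogeneous 2)
    (h : T ∈ Ideal.span {a, C}) :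
    ∃ (α : R) (b : MvPolynomial σ R), b.IsHomogeneous 1 ∧ T = α • C + a * b := by
  obtain ⟨u, v, rfl⟩ := Ideal.mem_span_pair.1 h
  refine ⟨coeff 0 v, homogeneousComponent 1 u, homogeneousComponent_isHomogeneous 1 u, ?_⟩
  rw [← homogeneousComponent_eq_self hT, map_add,
    (homogeneousComponent_mul_of_isHomogeneous_right ha 1 : homogeneousComponent 2 _ = _),
    (homogeneousComponent_mul_of_isHomogeneous_right hC 0 : homogeneousComponent 2 _ = _),
    homogeneousComponent_zero, smul_eq_C_mul]
  ring

theorem sub_aeval_mem_of_forall_X_sub_mem {I : Ideal (MvPolynomial σ R)}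
    {g : σ → MvPolynomial σ R} (hg : ∀ i, X i - g i ∈ I) (f : MvPolynomial σ R) :
    f - aeval g f ∈ I := by
  rw [← Ideal.Quotient.eq]
  change Ideal.Quotient.mkₐ R I f = (Ideal.Quotient.mkₐ R I).comp (aeval g) f
  rw [comp_aeval]
  conv_lhs => rw [← aeval_X_left_apply f, ← AlgHom.comp_apply, comp_aeval]
  congr 2
  funext i
  exact Ideal.Quotient.eq.2 (hg i)

end Homogeneous

section Field

variable {σ K : Type*} [Field K]

theorem IsHomogeneous.not_isUnit {p : MvPolynomial σ K} {n : ℕ} (hp : p.IsHomogeneous n)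
    (hn : n ≠ 0) : ¬IsUnit p := fun hu ↦
  hn <| (hp.totalDegree hu.ne_zero).symm.trans (isUnit_iff_totalDegree_of_isReduced.1 hu).2

theorem isUnit_of_totalDegree_eq_zero {p : MvPolynomial σ K} (hp : p.totalDegree = 0)
    (h0 : p ≠ 0) : IsUnit p := by
  rw [totalDegree_eq_zero_iff_eq_C] at hp
  rw [hp] at h0 ⊢
  exact (isUnit_iff_ne_zero.2 fun hc ↦ h0 (by rw [hc, map_zero])).map C

theorem IsHomogeneous.irreducible_of_degree_one {p : MvPolynomial σ K} (hp : p.IsHomogeneous 1)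
    (h0 : p ≠ 0) : Irreducible p := by
  refine irreducible_of_totalDegree_eq_one (hp.totalDegree h0) fun x hx ↦ ?_
  obtain ⟨d, hd⟩ := ne_zero_iff.1 h0
  exact isUnit_iff_ne_zero.2 fun hx0 ↦ hd (zero_dvd_iff.1 (hx0 ▸ hx d))

theorem IsHomogeneous.exists_eq_mul_of_not_irreducible {p : MvPolynomial σ K}
    (hp : p.IsHomogeneous 2) (hirr : ¬Irreducible p) :
    ∃ u v : MvPolynomial σ K, u.IsHomogeneous 1 ∧ v.IsHomogeneous 1 ∧ p = u * v := by
  rcases eq_or_ne p 0 with rfl | h0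
  · exact ⟨0, 0, isHomogeneous_zero _ _ _, isHomogeneous_zero _ _ _, (mul_zero 0).symm⟩
  obtain ⟨u, v, rfl, hu, hv⟩ : ∃ u v, p = u * v ∧ ¬IsUnit u ∧ ¬IsUnit v := by
    simpa [irreducible_iff, hp.not_isUnit two_ne_zero] using hirr
  have hu0 : u ≠ 0 := left_ne_zero_of_mul h0
  have hv0 : v ≠ 0 := right_ne_zero_of_mul h0
  have hdeg : u.totalDegree + v.totalDegree = 2 := by
    rw [← totalDegree_mul_of_isDomain hu0 hv0, hp.totalDegree h0]
  have hu1 : u.totalDegree = 1 := by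
    have := mt (isUnit_of_totalDegree_eq_zero · hu0) hu
    have := mt (isUnit_of_totalDegree_eq_zero · hv0) hv
    omega
  have hv1 : v.totalDegree = 1 := by omega
  have hv_split : v = homogeneousComponent 0 v + homogeneousComponent 1 v := by
    conv_lhs => rw [← sum_homogeneousComponent v, hv1]
    simp [Finset.sum_range_succ]
  refine ⟨homogeneousComponent 1 u, homogeneousComponent 1 v,
    homogeneousComponent_isHomogeneous 1 u, homogeneousComponent_isHomogeneous 1 v, ?_⟩
  have hu_top : homogeneousComponent 2 u = 0 := homogeneousComponent_eq_zero _ _ (by omega)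
  calc u * v = homogeneousComponent (2 + 0) (u * homogeneousComponent 0 v) +
        homogeneousComponent (1 + 1) (u * homogeneousComponent 1 v) := by
        rw [← homogeneousComponent_eq_self hp, ← map_add, ← mul_add, ← hv_split]
    _ = homogeneousComponent 1 u * homogeneousComponent 1 v := by
        rw [homogeneousComponent_mul_of_isHomogeneous_right
            (homogeneousComponent_isHomogeneous 0 v),
          homogeneousComponent_mul_of_isHomogeneous_right
            (homogeneousComponent_isHomogeneous 1 v), hu_top, zero_mul, zero_add]

open Classical in
theorem exists_algHom_sub_mem_span_singleton {a : MvPolynomial σ K}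
    (ha : a.IsHomogeneous 1) (h0 : a ≠ 0) :
    ∃ ψ : MvPolynomial σ K →ₐ[K] MvPolynomial σ K, (∀ f, f - ψ f ∈ Ideal.span {a}) ∧
      ψ a = 0 ∧ ∀ {f d}, f.IsHomogeneous d → (ψ f).IsHomogeneous d := by
  obtain ⟨c, hc⟩ := Finsupp.mem_span_range_iff_exists_finsupp.1 <|
    homogeneousSubmodule_one_eq_span_X (σ := σ) (R := K) ▸ (mem_homogeneousSubmodule 1 a).2 ha
  obtain ⟨i₀, hi₀⟩ : ∃ i₀, c i₀ ≠ 0 := by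
    by_contra! hc0
    rw [← hc, show c = 0 from Finsupp.ext hc0, Finsupp.sum_zero_index] at h0
    exact h0 rfl
  -- substitute `X i₀ ↦ X i₀ - a / c i₀`, which kills `a = ∑ c i • X i`
  set g : σ → MvPolynomial σ K := fun i ↦ X i - if i = i₀ then (c i₀)⁻¹ • a else 0
  have hg_sub : ∀ i, X i - g i ∈ Ideal.span {a} := fun i ↦ by
    simp only [g, sub_sub_cancel]
    split_ifs
    · simpa [smul_eq_C_mul] using Ideal.mul_mem_left _ _ (Ideal.mem_span_singleton_self a)
    · exact zero_mem _
  have hg_hom : ∀ i, (g i).IsHomogeneous 1 := fun i ↦ by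
    refine (isHomogeneous_X K i).sub ?_
    split_ifs
    · exact (homogeneousSubmodule σ K 1).smul_mem _ ha
    · exact isHomogeneous_zero _ _ _
  refine ⟨aeval g, sub_aeval_mem_of_forall_X_sub_mem hg_sub, ?_,
    fun hf ↦ by simpa using hf.aeval g hg_hom⟩
  conv_lhs => rw [← hc]
  simp only [g, Finsupp.sum, map_sum, map_smul, aeval_X, smul_sub, Finset.sum_sub_distrib,
    smul_ite, smul_zero, Finset.sum_ite_eq', Finsupp.mem_support_iff.2 hi₀, if_true,
    smul_smul, mul_inv_cancel₀ hi₀, one_smul]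
  exact sub_eq_zero.2 hc

end Field

end MvPolynomial

section MinimalSpace

variable {n : ℕ} {Q : MvPolynomial (Fin n) ℂ} {r : ℕ} {f : ℕ → MvPolynomial (Fin n) ℂ}

theorem IsRep.rankS_le (h : IsRep Q r f) : rankS Q ≤ r :=
  Nat.sInf_le (show r ∈ {r | ∃ g, IsRep Q r g} from ⟨f, h⟩)

theorem IsRep.exists_isRep_rankS (h : IsRep Q r f) : ∃ g, IsRep Q (rankS Q) g :=
  Nat.sInf_mem (show {r | ∃ g, IsRep Q r g}.Nonempty from ⟨r, f, h⟩)

theorem IsRep.rankS_ne_zero (h : IsRep Q r f) (hQ : Q ≠ 0) : rankS Q ≠ 0 := by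
  obtain ⟨g, hg⟩ := h.exists_isRep_rankS
  intro h0
  rw [h0] at hg
  exact hQ (by simpa using hg.2)

theorem IsRep.mem_MS (h : IsRep Q r f) (hr : rankS Q = r) {m : ℕ} (hm : m < 2 * r) :
    f m ∈ MS Q := by
  subst hr
  exact le_iSup₂ (f := fun g (_ : IsRep Q (rankS Q) g) ↦
    Submodule.span ℂ (g '' Set.Iio (2 * rankS Q))) f h (Submodule.subset_span ⟨m, hm, rfl⟩)

theorem Irreducible.not_isRep_one (hQ : Irreducible Q) (f : ℕ → MvPolynomial (Fin n) ℂ) :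
    ¬IsRep Q 1 f := by
  rintro ⟨hlin, hQf⟩
  rcases hQ.isUnit_or_isUnit (by simpa using hQf) with hu | hu
  · exact IsHomogeneous.not_isUnit (hlin 0 (by norm_num)) one_ne_zero hu
  · exact IsHomogeneous.not_isUnit (hlin 1 (by norm_num)) one_ne_zero hu

theorem IsRep.rankS_eq_two_of_irreducible (h : IsRep Q 2 f) (hQ : Irreducible Q) :
    rankS Q = 2 := by
  have h0 := h.rankS_ne_zero hQ.ne_zero
  obtain ⟨g, hg⟩ := h.exists_isRep_rankS
  have h1 : rankS Q ≠ 1 := fun h1 ↦ hQ.not_isRep_one g (h1 ▸ hg)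
  have := h.rankS_le
  omega

theorem Irreducible.mem_MS_of_eq_mul_add_mul {u v a e : MvPolynomial (Fin n) ℂ}
    (hQ : Irreducible Q) (hu : IsLinearForm u) (hv : IsLinearForm v) (ha : IsLinearForm a)
    (he : IsLinearForm e) (hQ_eq : Q = u * v + a * e) : a ∈ MS Q := by
  have hrep : IsRep Q 2 ([u, v, a, e].getD · 0) :=
    ⟨fun m hm ↦ by interval_cases m <;> assumption, by simp [Finset.sum_range_succ, hQ_eq]⟩
  exact hrep.mem_MS (hrep.rankS_eq_two_of_irreducible hQ) (m := 2) (by norm_num)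

theorem mem_MS_mul_self {b : MvPolynomial (Fin n) ℂ} (hb : IsLinearForm b) (hb0 : b ≠ 0) :
    b ∈ MS (b * b) := by
  have hrep : IsRep (b * b) 1 fun _ ↦ b := ⟨fun _ _ ↦ hb, by simp⟩
  have hrank : rankS (b * b) = 1 :=
    le_antisymm hrep.rankS_le (Nat.one_le_iff_ne_zero.2
      (hrep.rankS_ne_zero (mul_self_ne_zero.2 hb0)))
  exact hrep.mem_MS hrank (m := 0) (by norm_num)

theorem mem_MS_mul_self_of_mem_span_singleton {a b : MvPolynomial (Fin n) ℂ}
    (ha : IsLinearForm a) (hb : IsLinearForm b) (hb0 : b ≠ 0) (hab : b ∈ Ideal.span {a}) :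
    a ∈ MS (b * b) := by
  obtain ⟨e, he, rfl⟩ := IsHomogeneous.exists_eq_mul_of_mem_span_singleton (k := 0) hb ha hab
  obtain ⟨c, rfl⟩ : ∃ c, e = C c :=
    ⟨_, totalDegree_eq_zero_iff_eq_C.1 ((totalDegree_zero_iff_isHomogeneous _).2 he)⟩
  have hc : c ≠ 0 := by rintro rfl; simp at hb0
  convert (MS _).smul_mem c⁻¹ (mem_MS_mul_self hb hb0) using 1
  rw [mul_comm, ← smul_eq_C_mul, smul_smul, inv_mul_cancel₀ hc, one_smul]

end MinimalSpace

section EKQuadCond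

variable {n : ℕ} {T : Fin 3 → Finset (MvPolynomial (Fin n) ℂ)}

theorem EKQuadCond.isHomogeneous_two (hEK : EKQuadCond T) {i : Fin 3}
    {P : MvPolynomial (Fin n) ℂ} (hP : P ∈ T i) : P.IsHomogeneous 2 := by
  rcases hEK.2.1 i P hP with ⟨-, h⟩ | ⟨l, hl, rfl⟩
  · exact h
  · exact hl.mul hl

theorem EKQuadCond.ne_zero (hEK : EKQuadCond T) {i j : Fin 3} {P Q : MvPolynomial (Fin n) ℂ}
    (hP : P ∈ T i) (hP0 : P ≠ 0) (hQ : Q ∈ T j) : Q ≠ 0 := by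
  rintro rfl
  exact hEK.1 i P hP j 0 hQ hP0 0 (zero_smul ℂ P).symm

end EKQuadCond

/-- Observation `gen-case-reducible`: under the EK-quadratics condition,
for `C ∈ T_k` and `A = a² ∈ T_i` the square of a linear form, either some `T ∈ T_j` equals
`αC + a·b` for a linear form `b`, or `a ∈ MS(C)`, or `C = b²` and some `T ∈ T_j` lies in
`⟨a, b⟩`. -/
theorem gen_case_reducible (n : ℕ) (T : Fin 3 → Finset (MvPolynomial (Fin n) ℂ))
    (hEK : EKQuadCond T)
    (i j k : Fin 3) (hij : i ≠ j) (hjk : j ≠ k) (hik : i ≠ k)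
    (C : MvPolynomial (Fin n) ℂ) (hC : C ∈ T k)
    (a : MvPolynomial (Fin n) ℂ) (ha : IsLinearForm a) (hA : a * a ∈ T i) :
    (∃ T' ∈ T j, ∃ (α : ℂ) (b : MvPolynomial (Fin n) ℂ),
        IsLinearForm b ∧ T' = α • C + a * b) ∨
    a ∈ MS C ∨
    (∃ b : MvPolynomial (Fin n) ℂ, IsLinearForm b ∧ C = b * b ∧
        ∃ T' ∈ T j, T' ∈ Ideal.span ({a, b} : Set (MvPolynomial (Fin n) ℂ))) := by
  rcases eq_or_ne a 0 with rfl | ha0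
  · exact Or.inr (Or.inl (MS C).zero_mem)
  obtain ⟨ψ, hψ, hψa, hψ_hom⟩ := exists_algHom_sub_mem_span_singleton ha ha0
  have hrad := hEK.2.2 i k j hik hjk.symm hij (a * a) hA C hC
  rcases hEK.2.1 k C hC with ⟨hC_irr, hC2⟩ | ⟨b, hb, rfl⟩
  · by_cases hψC : Irreducible (ψ C)
    · have := Ideal.isPrime_span_pair_of_prime hψ hψa hψC.prime
      obtain ⟨T', hT', hT'_mem⟩ := Ideal.exists_mem_of_prod_mem_radical
        (Ideal.span_pair_le_span_pair (dvd_mul_right a a) dvd_rfl) hrad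
      exact Or.inl ⟨T', hT', (hEK.isHomogeneous_two hT').exists_eq_smul_add_mul_of_mem_span_pair
        ha hC2 hT'_mem⟩
    · obtain ⟨u, v, hu, hv, huv⟩ := (hψ_hom hC2).exists_eq_mul_of_not_irreducible hψC
      obtain ⟨e, he, hCe⟩ :=
        IsHomogeneous.exists_eq_mul_of_mem_span_singleton (hC2.sub (hψ_hom hC2)) ha (hψ C)
      exact Or.inr (Or.inl (hC_irr.mem_MS_of_eq_mul_add_mul hu hv ha he
        (by rw [← huv, ← hCe, add_sub_cancel])))
  · have hb0 : b ≠ 0 := fun h ↦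
      hEK.ne_zero hA (mul_self_ne_zero.2 ha0) hC (by rw [h, mul_zero])
    by_cases hψb : ψ b = 0
    · exact Or.inr (Or.inl (mem_MS_mul_self_of_mem_span_singleton ha hb hb0
        (by simpa [hψb] using hψ b)))
    · have := Ideal.isPrime_span_pair_of_prime hψ hψa
        ((hψ_hom hb).irreducible_of_degree_one hψb).prime
      exact Or.inr (Or.inr ⟨b, hb, rfl, Ideal.exists_mem_of_prod_mem_radical
        (Ideal.span_pair_le_span_pair (dvd_mul_right a a) (dvd_mul_right b b)) hrad⟩)
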